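/- Let p be an odd prime, a_p = 0, and P_n ∈ Z_p[x] (deg P_n < p^n) satisfy P_0 ∈ Z_p×, P_1 ≡ a_p·P_0 - Q_0 (mod x) with Q_0 ∈ Z_p determined by (p-1)P_0 = (a_p - 2)Q_0, and P_{n+2} ≡ -ξ_{n+1}P_n (mod ω_{n+1}) for n ≥ 0. Then μ(P_n) = 0 for all n, λ(P_0) = λ(P_1) = 0, λ(P_2) = p - 1, λ(P_3) = p(p-1), λ(P_4) = (p-1)(p²+1), and in general λ(P_{n+2}) = λ(P_n) + p^n(p-1). -/

import Mathlib

open Polynomial PowerSeries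

/-- `ω_n(x) = (1+x)^(p^n) - 1 ∈ ℤ_p[x]`. -/
noncomputable def omegaPoly (p : ℕ) [Fact p.Prime] (n : ℕ) : Polynomial ℤ_[p] :=
  (Polynomial.X + 1) ^ (p ^ n) - 1

/-- `ξ_n(x) = ω_n/ω_{n-1} = Σ_{i=0}^{p-1} (1+x)^(i·p^(n-1)) ∈ ℤ_p[x]`. -/
noncomputable def xiPoly (p : ℕ) [Fact p.Prime] (n : ℕ) : Polynomial ℤ_[p] :=
  ∑ i ∈ Finset.range p, (Polynomial.X + 1) ^ (i * p ^ (n - 1))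

/-- Weierstrass decomposition `F = u · p^μ · (X^λ + p·R)`, `u ∈ ℤ_p⟦X⟧ˣ`, `deg R < λ`. -/
def IsWeier (p : ℕ) [Fact p.Prime] (F : PowerSeries ℤ_[p]) (μ lam : ℕ) : Prop :=
  ∃ (u : (PowerSeries ℤ_[p])ˣ) (R : Polynomial ℤ_[p]), R.degree < (lam : ℕ) ∧
    F = (u : PowerSeries ℤ_[p]) *
      ((p : PowerSeries ℤ_[p]) ^ μ *
        (PowerSeries.X ^ lam + (p : PowerSeries ℤ_[p]) * (R : PowerSeries ℤ_[p])))

namespace KuriharaAux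

variable {p : ℕ} [Fact p.Prime]

lemma isUnit_one_sub_p_mul (t : ℤ_[p]) : IsUnit (1 - (p : ℤ_[p]) * t) := by
  rw [PadicInt.isUnit_iff]
  have hp1 : (1 : ℝ) < p := by exact_mod_cast (Fact.out : p.Prime).one_lt
  have hpt : ‖(p : ℤ_[p]) * t‖ < 1 := by
    rw [norm_mul]
    calc ‖(p : ℤ_[p])‖ * ‖t‖ ≤ ‖(p : ℤ_[p])‖ * 1 :=
          mul_le_mul_of_nonneg_left (PadicInt.norm_le_one t) (norm_nonneg _)
      _ = ‖(p : ℤ_[p])‖ := mul_one _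
      _ < 1 := by
          rw [PadicInt.norm_p]
          exact inv_lt_one_of_one_lt₀ hp1
  have hle : ‖1 - (p : ℤ_[p]) * t‖ ≤ 1 := PadicInt.norm_le_one _
  rcases lt_or_eq_of_le hle with hlt | heq
  · exfalso
    have h1 : (1 : ℝ) = ‖(1 : ℤ_[p])‖ := norm_one.symm
    have : ‖(1 : ℤ_[p])‖ ≤ max ‖1 - (p : ℤ_[p]) * t‖ ‖(p : ℤ_[p]) * t‖ := by
      have := PadicInt.nonarchimedean (1 - (p : ℤ_[p]) * t) ((p : ℤ_[p]) * t)
      simpa using this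
    rw [← h1] at this
    have : (1 : ℝ) < 1 := lt_of_le_of_lt this (max_lt hlt hpt)
    exact lt_irrefl _ this
  · exact heq

lemma isUnit_of_constantCoeff (φ : PowerSeries ℤ_[p])
    (h : IsUnit (PowerSeries.constantCoeff (R := ℤ_[p]) φ)) : IsUnit φ := by
  refine ⟨⟨φ, PowerSeries.invOfUnit φ h.unit, PowerSeries.mul_invOfUnit φ h.unit h.unit_spec.symm,
    ?_⟩, rfl⟩
  rw [mul_comm]
  exact PowerSeries.mul_invOfUnit φ h.unit h.unit_spec.symm

/-- Shift a power series down by `l` places. -/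
noncomputable def shiftL (p : ℕ) [Fact p.Prime] (l : ℕ) (w : PowerSeries ℤ_[p]) :
    PowerSeries ℤ_[p] :=
  PowerSeries.mk fun j => PowerSeries.coeff (j + l) w

lemma coeff_shiftL (l n : ℕ) (w : PowerSeries ℤ_[p]) :
    PowerSeries.coeff n (shiftL p l w) = PowerSeries.coeff (n + l) w :=
  PowerSeries.coeff_mk _ _

lemma trunc_add_shift (l : ℕ) (w : PowerSeries ℤ_[p]) :
    ((PowerSeries.trunc l w : Polynomial ℤ_[p]) : PowerSeries ℤ_[p])
      + PowerSeries.X ^ l * shiftL p l w = w := by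
  ext n
  rw [map_add, Polynomial.coeff_coe, PowerSeries.coeff_trunc,
    PowerSeries.coeff_X_pow_mul']
  by_cases h : n < l
  · rw [if_pos h, if_neg (by omega)]; ring
  · rw [if_neg h, if_pos (by omega), coeff_shiftL, Nat.sub_add_cancel (by omega)]; ring

/-- The contraction operator for Weierstrass preparation. -/
noncomputable def wL (p : ℕ) [Fact p.Prime] (l : ℕ) (H : PowerSeries ℤ_[p])
    (w : PowerSeries ℤ_[p]) : PowerSeries ℤ_[p] :=
  shiftL p l (w * H)

/-- The fixed point `y = Σ (-p)^k L^k(1)`. -/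
noncomputable def wY (p : ℕ) [Fact p.Prime] (l : ℕ) (H : PowerSeries ℤ_[p]) :
    PowerSeries ℤ_[p] :=
  PowerSeries.mk fun n =>
    ∑' k : ℕ, PowerSeries.coeff n ((wL p l H)^[k] 1) * (-(p : ℤ_[p])) ^ k

lemma summable_aux (w : ℕ → PowerSeries ℤ_[p]) (n : ℕ) :
    Summable (fun k : ℕ => PowerSeries.coeff n (w k) * (-(p : ℤ_[p])) ^ k) := by
  have hp1 : (1 : ℝ) < p := by exact_mod_cast (Fact.out : p.Prime).one_lt
  apply Summable.of_norm_bounded (g := fun k => ((p : ℝ)⁻¹) ^ k)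
  · exact summable_geometric_of_lt_one (by positivity) (inv_lt_one_of_one_lt₀ hp1)
  · intro k
    rw [norm_mul, norm_pow, norm_neg, PadicInt.norm_p]
    calc ‖PowerSeries.coeff n (w k)‖ * ((p : ℝ)⁻¹) ^ k
        ≤ 1 * ((p : ℝ)⁻¹) ^ k := by
          apply mul_le_mul_of_nonneg_right (PadicInt.norm_le_one _)
          positivity
      _ = ((p : ℝ)⁻¹) ^ k := one_mul _

set_option maxHeartbeats 1000000 in
lemma coeff_wL_wY (l n : ℕ) (H : PowerSeries ℤ_[p]) :
    PowerSeries.coeff n (wL p l H (wY p l H)) =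
      ∑' k : ℕ, PowerSeries.coeff n ((wL p l H)^[k + 1] 1) * (-(p : ℤ_[p])) ^ k := by
  rw [wL, coeff_shiftL, PowerSeries.coeff_mul]
  have h1 : ∀ q ∈ Finset.HasAntidiagonal.antidiagonal (n + l),
      PowerSeries.coeff q.1 (wY p l H) * PowerSeries.coeff q.2 H
        = ∑' k : ℕ, (PowerSeries.coeff q.1 ((wL p l H)^[k] 1) * (-(p : ℤ_[p])) ^ k)
            * PowerSeries.coeff q.2 H := by
    intro q _
    rw [wY, PowerSeries.coeff_mk,
      Summable.tsum_mul_right _ (summable_aux (fun k => (wL p l H)^[k] 1) q.1)]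
  rw [Finset.sum_congr rfl h1,
    ← Summable.tsum_finsetSum (fun q _ => (summable_aux (fun k => (wL p l H)^[k] 1) q.1).mul_right _)]
  apply tsum_congr
  intro k
  rw [Function.iterate_succ_apply', wL, coeff_shiftL, PowerSeries.coeff_mul,
    Finset.sum_mul]
  apply Finset.sum_congr rfl
  intro q _
  ring

lemma wY_eq (l : ℕ) (H : PowerSeries ℤ_[p]) :
    wY p l H = 1 - PowerSeries.C (R := ℤ_[p]) (p : ℤ_[p]) * wL p l H (wY p l H) := by
  ext n
  rw [map_sub, PowerSeries.coeff_C_mul, coeff_wL_wY, wY, PowerSeries.coeff_mk,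
    Summable.tsum_eq_zero_add (summable_aux (fun k => (wL p l H)^[k] 1) n)]
  have h0 : PowerSeries.coeff n ((wL p l H)^[0] 1) * (-(p : ℤ_[p])) ^ 0
      = PowerSeries.coeff n 1 := by
    simp
  rw [h0]
  have h1 : ∀ k : ℕ,
      PowerSeries.coeff n ((wL p l H)^[k + 1] 1) * (-(p : ℤ_[p])) ^ (k + 1)
        = (-(p : ℤ_[p])) *
            (PowerSeries.coeff n ((wL p l H)^[k + 1] 1) * (-(p : ℤ_[p])) ^ k) := by
    intro k; ring
  rw [tsum_congr h1,
    Summable.tsum_mul_left _ (summable_aux (fun k => (wL p l H)^[k + 1] 1) n)]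
  ring

/-- Weierstrass preparation with `μ = 0` for `ℤ_p⟦X⟧`. -/
lemma isWeier_of_coeffs (F : PowerSeries ℤ_[p]) (l : ℕ)
    (hlow : ∀ i, i < l → (p : ℤ_[p]) ∣ PowerSeries.coeff i F)
    (hu : IsUnit (PowerSeries.coeff l F)) :
    IsWeier p F 0 l := by
  classical
  set G : PowerSeries ℤ_[p] := shiftL p l F with hG
  have hGc : PowerSeries.constantCoeff (R := ℤ_[p]) G = PowerSeries.coeff l F := by
    rw [hG, ← PowerSeries.coeff_zero_eq_constantCoeff_apply, coeff_shiftL, zero_add]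
  set Gi : PowerSeries ℤ_[p] := PowerSeries.invOfUnit G hu.unit with hGi
  have hGGi : G * Gi = 1 :=
    PowerSeries.mul_invOfUnit G hu.unit (by rw [hGc]; exact hu.unit_spec.symm)
  set Cs : PowerSeries ℤ_[p] :=
    PowerSeries.mk (fun i => if h : i < l then (hlow i h).choose else 0) with hCs
  have hsplit : F = PowerSeries.C (R := ℤ_[p]) (p : ℤ_[p]) * Cs + PowerSeries.X ^ l * G := by
    ext n
    rw [map_add, PowerSeries.coeff_C_mul, hCs, PowerSeries.coeff_mk,
      PowerSeries.coeff_X_pow_mul']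
    by_cases h : n < l
    · rw [dif_pos h, if_neg (by omega), ← (hlow n h).choose_spec]; ring
    · rw [dif_neg h, if_pos (by omega), hG, coeff_shiftL,
        Nat.sub_add_cancel (by omega)]; ring
  set H : PowerSeries ℤ_[p] := Gi * Cs with hH
  set y : PowerSeries ℤ_[p] := wY p l H with hy
  have hyeq : y = 1 - PowerSeries.C (R := ℤ_[p]) (p : ℤ_[p]) * wL p l H y := wY_eq l H
  set w : PowerSeries ℤ_[p] := y * H with hw
  have hLy : wL p l H y = shiftL p l w := rfl
  have step1 : (Gi * y) * F
      = PowerSeries.C (R := ℤ_[p]) (p : ℤ_[p]) * w + PowerSeries.X ^ l * y := by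
    rw [hsplit, hw, hH]
    linear_combination (PowerSeries.X ^ l * y) * hGGi
  have hvF : (Gi * y) * F = PowerSeries.X ^ l + PowerSeries.C (R := ℤ_[p]) (p : ℤ_[p]) *
      ((PowerSeries.trunc l w : Polynomial ℤ_[p]) : PowerSeries ℤ_[p]) := by
    have htr : ((PowerSeries.trunc l w : Polynomial ℤ_[p]) : PowerSeries ℤ_[p])
        = w - PowerSeries.X ^ l * shiftL p l w := by
      have h := trunc_add_shift (p := p) l w
      linear_combination h
    rw [htr, step1, hyeq, hLy]
    ring
  have hyu : IsUnit (PowerSeries.constantCoeff (R := ℤ_[p]) y) := by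
    have h := congrArg (PowerSeries.constantCoeff (R := ℤ_[p])) hyeq
    simp only [map_sub, map_one, map_mul, PowerSeries.constantCoeff_C] at h
    rw [h]
    exact isUnit_one_sub_p_mul _
  have hvu : IsUnit (Gi * y) := by
    apply isUnit_of_constantCoeff
    rw [map_mul]
    apply IsUnit.mul _ hyu
    rw [hGi, PowerSeries.constantCoeff_invOfUnit]
    exact (hu.unit⁻¹).isUnit
  obtain ⟨vu, hvu_eq⟩ := hvu
  refine ⟨vu⁻¹, PowerSeries.trunc l w, PowerSeries.degree_trunc_lt w l, ?_⟩
  rw [pow_zero, one_mul, ← map_natCast (PowerSeries.C (R := ℤ_[p])) p]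
  have h2 : (vu : PowerSeries ℤ_[p]) * F = PowerSeries.X ^ l +
      PowerSeries.C (R := ℤ_[p]) (p : ℤ_[p]) *
        ((PowerSeries.trunc l w : Polynomial ℤ_[p]) : PowerSeries ℤ_[p]) := by
    rw [hvu_eq]; exact hvF
  calc F = (vu⁻¹ : (PowerSeries ℤ_[p])ˣ) * ((vu : PowerSeries ℤ_[p]) * F) := by
        rw [← mul_assoc]
        norm_cast
        rw [inv_mul_cancel]
        simp
    _ = _ := by rw [h2]

/-- The λ-invariant sequence. -/
def lamF (p : ℕ) : ℕ → ℕ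
  | 0 => 0
  | 1 => 0
  | n + 2 => lamF p n + p ^ n * (p - 1)

theorem lamF_lt (hp : 2 ≤ p) : ∀ n, lamF p n < p ^ n
  | 0 => by simp [lamF]
  | 1 => by simp [lamF]; omega
  | n + 2 => by
    have h := lamF_lt hp n
    have e : p ^ n * (p - 1) + p ^ n = p ^ n * p := by
      have h1 : p - 1 + 1 = p := by omega
      calc p ^ n * (p - 1) + p ^ n = p ^ n * ((p - 1) + 1) := by ring
        _ = p ^ n * p := by rw [h1]
    have hpn : 1 ≤ p ^ n := Nat.one_le_pow n p (by omega)
    have hp2 : p ^ (n + 2) = p ^ n * p * p := by ring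
    have hle : p ^ n * p ≤ p ^ n * p * p := by
      have : 1 ≤ p := by omega
      exact Nat.le_mul_of_pos_right _ (by omega)
    show lamF p n + p ^ n * (p - 1) < p ^ (n + 2)
    omega

lemma dvd_iff_toZMod_eq_zero (x : ℤ_[p]) :
    PadicInt.toZMod x = 0 ↔ (p : ℤ_[p]) ∣ x := by
  rw [← Ideal.mem_span_singleton, ← PadicInt.maximalIdeal_eq_span_p,
    ← PadicInt.ker_toZMod, RingHom.mem_ker]

lemma isUnit_iff_toZMod_ne_zero (x : ℤ_[p]) :
    IsUnit x ↔ PadicInt.toZMod x ≠ 0 := by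
  rw [Ne, ← RingHom.mem_ker, PadicInt.ker_toZMod, IsLocalRing.mem_maximalIdeal,
    mem_nonunits_iff, not_not]

lemma map_omega (n : ℕ) :
    (omegaPoly p n).map (PadicInt.toZMod) = Polynomial.X ^ (p ^ n) := by
  simp only [omegaPoly, Polynomial.map_sub, Polynomial.map_pow, Polynomial.map_add,
    Polynomial.map_one, Polynomial.map_X]
  rw [add_pow_char_pow]
  simp

lemma pow_sub_one_add (hp : 2 ≤ p) (n : ℕ) : p ^ n * (p - 1) + p ^ n = p ^ n * p := by
  have h1 : p - 1 + 1 = p := by omega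
  calc p ^ n * (p - 1) + p ^ n = p ^ n * ((p - 1) + 1) := by ring
    _ = p ^ n * p := by rw [h1]

lemma map_xi (n : ℕ) :
    (xiPoly p (n + 1)).map (PadicInt.toZMod) = Polynomial.X ^ (p ^ n * (p - 1)) := by
  have hp2 : 2 ≤ p := (Fact.out : p.Prime).two_le
  have hXn : (Polynomial.X : (ZMod p)[X]) ^ (p ^ n) ≠ 0 :=
    pow_ne_zero _ Polynomial.X_ne_zero
  apply mul_right_cancel₀ hXn
  have hrhs : (Polynomial.X : (ZMod p)[X]) ^ (p ^ n * (p - 1)) * Polynomial.X ^ (p ^ n)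
      = Polynomial.X ^ (p ^ (n + 1)) := by
    rw [← pow_add, pow_sub_one_add hp2, ← pow_succ]
  rw [hrhs]
  simp only [xiPoly, Nat.add_sub_cancel, Polynomial.map_sum, Polynomial.map_pow,
    Polynomial.map_add, Polynomial.map_one, Polynomial.map_X]
  have h1 : ∀ i : ℕ, ((Polynomial.X : (ZMod p)[X]) + 1) ^ (i * p ^ n)
      = ((Polynomial.X : (ZMod p)[X]) ^ (p ^ n) + 1) ^ i := by
    intro i
    rw [mul_comm, pow_mul, add_pow_char_pow, one_pow]
  rw [Finset.sum_congr rfl (fun i _ => h1 i)]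
  set t : (ZMod p)[X] := (Polynomial.X : (ZMod p)[X]) ^ (p ^ n) + 1 with ht
  have ht2 : (Polynomial.X : (ZMod p)[X]) ^ (p ^ n) = t - 1 := by rw [ht]; ring
  rw [ht2, geom_sum_mul, ht, add_pow_char, one_pow, ← pow_mul, ← pow_succ]
  ring

end KuriharaAux

open KuriharaAux in
/-- Let `p` be an odd prime, `a_p = 0`, and `P_n ∈ ℤ_p[x]` (`deg P_n < p^n`)
satisfy: `P₀ ∈ ℤ_pˣ`, `P₁ ≡ a_p·P₀ - Q₀ (mod x)` where `(p-1)·P₀ = (a_p - 2)·Q₀`, and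
`P_{n+2} ≡ -ξ_{n+1}·P_n (mod ω_{n+1})` for `n ≥ 0`. Then `μ(P_n) = 0` for all `n`,
`λ(P₀) = λ(P₁) = 0`, `λ(P₂) = p-1`, `λ(P₃) = p(p-1)`, `λ(P₄) = (p-1)(p²+1)`, and
in general `λ(P_{n+2}) = λ(P_n) + p^n(p-1)`. -/
theorem kurihara_lambda_values
    (p : ℕ) [Fact p.Prime] (hp : Odd p)
    (P : ℕ → Polynomial ℤ_[p]) (Q₀ : ℤ_[p])
    (hdeg : ∀ n, (P n).degree < ((p ^ n : ℕ) : WithBot ℕ))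
    (hP₀ : IsUnit ((P 0).coeff 0))
    (hQ₀ : ((p : ℤ_[p]) - 1) * ((P 0).coeff 0) = ((0 : ℤ_[p]) - 2) * Q₀)
    (hP₁ : Polynomial.X ∣
      (P 1 - Polynomial.C ((0 : ℤ_[p]) * ((P 0).coeff 0) - Q₀)))
    (hrec : ∀ n, omegaPoly p (n + 1) ∣ (P (n + 2) + xiPoly p (n + 1) * P n)) :
    ∃ lam : ℕ → ℕ,
      (∀ n, IsWeier p ((P n : Polynomial ℤ_[p]) : PowerSeries ℤ_[p]) 0 (lam n)) ∧
      lam 0 = 0 ∧ lam 1 = 0 ∧ lam 2 = p - 1 ∧ lam 3 = p * (p - 1) ∧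
      lam 4 = (p - 1) * (p ^ 2 + 1) ∧
      (∀ n, lam (n + 2) = lam n + p ^ n * (p - 1)) := by
  have hp2 : 2 ≤ p := (Fact.out : p.Prime).two_le
  set q : ℕ → Polynomial (ZMod p) := fun n => (P n).map PadicInt.toZMod with hq
  -- Q₀ is a unit
  have hQunit : IsUnit Q₀ := by
    have h2 : IsUnit ((p : ℤ_[p]) - 1) := by
      have h := (isUnit_one_sub_p_mul (p := p) 1).neg
      rw [mul_one] at h
      convert h using 1
      ring
    have h3 : IsUnit (((p : ℤ_[p]) - 1) * ((P 0).coeff 0)) := h2.mul hP₀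
    rw [hQ₀] at h3
    exact isUnit_of_mul_isUnit_right h3
  -- coefficient 0 of P 1 is a unit
  have hP1unit : IsUnit ((P 1).coeff 0) := by
    obtain ⟨g, hg⟩ := hP₁
    have h0 : (P 1).coeff 0 = 0 * ((P 0).coeff 0) - Q₀ := by
      have h := congrArg (fun f => Polynomial.coeff f 0) hg
      simp only [Polynomial.coeff_sub, Polynomial.coeff_C_zero, Polynomial.mul_coeff_zero,
        Polynomial.coeff_X_zero, zero_mul] at h
      linear_combination h
    rw [h0]
    simpa using hQunit.neg
  -- the key mod-p invariant
  have hGood : ∀ n, (∀ i, i < lamF p n → (q n).coeff i = 0) ∧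
      (q n).coeff (lamF p n) ≠ 0 := by
    intro n
    induction n using Nat.strong_induction_on with
    | _ n ih =>
      match n with
      | 0 =>
        refine ⟨fun i hi => absurd hi (by simp [lamF]), ?_⟩
        show ((P 0).map PadicInt.toZMod).coeff (lamF p 0) ≠ 0
        rw [show lamF p 0 = 0 from rfl, Polynomial.coeff_map]
        exact (isUnit_iff_toZMod_ne_zero _).1 hP₀
      | 1 =>
        refine ⟨fun i hi => absurd hi (by simp [lamF]), ?_⟩
        show ((P 1).map PadicInt.toZMod).coeff (lamF p 1) ≠ 0
        rw [show lamF p 1 = 0 from rfl, Polynomial.coeff_map]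
        exact (isUnit_iff_toZMod_ne_zero _).1 hP1unit
      | k + 2 =>
        obtain ⟨hzero, hne⟩ := ih k (by omega)
        obtain ⟨h, hh⟩ := hrec k
        set m : ℕ := p ^ k * (p - 1) with hm
        have hq2 : q (k + 2) = Polynomial.X ^ (p ^ (k + 1)) * (h.map PadicInt.toZMod)
            - Polynomial.X ^ m * q k := by
          have hmap := congrArg (Polynomial.map (PadicInt.toZMod (p := p))) hh
          simp only [Polynomial.map_add, Polynomial.map_mul, map_omega, map_xi] at hmap
          show (P (k + 2)).map PadicInt.toZMod = _
          linear_combination hmap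
        have hlam2 : lamF p (k + 2) = lamF p k + m := rfl
        have hlk : lamF p k < p ^ k := lamF_lt hp2 k
        have hmp : m + p ^ k = p ^ k * p := pow_sub_one_add hp2 k
        have hpp : p ^ (k + 1) = p ^ k * p := pow_succ p k
        have hlt : lamF p k + m < p ^ (k + 1) := by omega
        have key : ∀ i, i ≤ lamF p k + m → (q (k + 2)).coeff i =
            -(if m ≤ i then (q k).coeff (i - m) else 0) := by
          intro i hi
          rw [hq2, Polynomial.coeff_sub, Polynomial.coeff_X_pow_mul',
            Polynomial.coeff_X_pow_mul']
          rw [if_neg (by omega)]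
          ring
        constructor
        · intro i hi
          rw [hlam2] at hi
          rw [key i (by omega)]
          by_cases hmi : m ≤ i
          · rw [if_pos hmi, hzero (i - m) (by omega), neg_zero]
          · rw [if_neg hmi, neg_zero]
        · rw [hlam2, key (lamF p k + m) le_rfl, if_pos (by omega)]
          have : lamF p k + m - m = lamF p k := by omega
          rw [this]
          exact neg_ne_zero.2 hne
  refine ⟨lamF p, ?_, rfl, rfl, ?_, ?_, ?_, fun n => rfl⟩
  · intro n
    apply isWeier_of_coeffs
    · intro i hi
      rw [Polynomial.coeff_coe, ← dvd_iff_toZMod_eq_zero]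
      have := (hGood n).1 i hi
      rwa [hq, Polynomial.coeff_map] at this
    · rw [Polynomial.coeff_coe, isUnit_iff_toZMod_ne_zero]
      have := (hGood n).2
      rwa [hq, Polynomial.coeff_map] at this
  · show lamF p 0 + p ^ 0 * (p - 1) = p - 1
    simp [lamF]
  · show lamF p 1 + p ^ 1 * (p - 1) = p * (p - 1)
    simp [lamF]
  · show lamF p 2 + p ^ 2 * (p - 1) = (p - 1) * (p ^ 2 + 1)
    show (lamF p 0 + p ^ 0 * (p - 1)) + p ^ 2 * (p - 1) = (p - 1) * (p ^ 2 + 1)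
    simp only [lamF, pow_zero, one_mul, Nat.zero_add]
    rw [Nat.mul_add, Nat.mul_one, Nat.mul_comm (p - 1) (p ^ 2)]
    omega
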